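/- arXiv:2602.22129 — 5 statements merged into one kernel-verified Lean document; each statement's English description precedes it below -/
import Mathlib

section
/- Let λ = ⟨λ_1, ..., λ_k⟩ be an integer partition of format (k+1)×k with λ_i ≤ k+1-i for all i ∈ [k], and let λ^T be its transpose (conjugate) partition with parts λ^T_1, ..., λ^T_{k+1}. Then [k+1-λ_1]_q [k-λ_2]_q ··· [2-λ_k]_q = [k+1-λ^T_1]_q [k-λ^T_2]_q ··· [1-λ^T_{k+1}]_q as polynomials in q. -/
/-- The q-integer `[n]_q = 1 + q + ... + q^{n-1}`. -/
def qInt (q n : ℕ) : ℕ := ∑ i ∈ Finset.range n, q ^ i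

namespace Stmt2Aux

variable {k : ℕ} (lam : Fin k → ℕ)

/-- `lam` extended to all naturals by `0`. -/
def lamN (lam : Fin k → ℕ) (i : ℕ) : ℕ := if h : i < k then lam ⟨i, h⟩ else 0

/-- The conjugate partition: `conjN m = #{i : lam i ≥ m}`. -/
def conjN (lam : Fin k → ℕ) (m : ℕ) : ℕ :=
  ((Finset.range k).filter (fun i => m ≤ lamN lam i)).card

lemma lamN_coe (i : Fin k) : lamN lam (i : ℕ) = lam i := by
  simp [lamN, i.isLt]

lemma lamN_anti (hmono : Antitone lam) {i j : ℕ} (hij : i ≤ j) (hj : j < k) :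
    lamN lam j ≤ lamN lam i := by
  have hi : i < k := lt_of_le_of_lt hij hj
  simp only [lamN, dif_pos hi, dif_pos hj]
  exact hmono (by exact_mod_cast hij)

lemma conjN_le (m : ℕ) : conjN lam m ≤ k := by
  classical
  calc conjN lam m ≤ (Finset.range k).card := Finset.card_filter_le _ _
    _ = k := Finset.card_range k

/-- Duality: `m ≤ λ_i ↔ i + 1 ≤ λ^T_m`. -/
lemma dual (hmono : Antitone lam) {i : ℕ} (hi : i < k) (m : ℕ) :
    m ≤ lamN lam i ↔ i + 1 ≤ conjN lam m := by
  classical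
  constructor
  · intro h
    have hsub : Finset.range (i + 1) ⊆
        (Finset.range k).filter (fun x => m ≤ lamN lam x) := by
      intro x hx
      rw [Finset.mem_range] at hx
      have hx' : x ≤ i := Nat.lt_succ_iff.1 hx
      refine Finset.mem_filter.2 ⟨Finset.mem_range.2 (lt_of_le_of_lt hx' hi), ?_⟩
      exact le_trans h (lamN_anti lam hmono hx' hi)
    have := Finset.card_le_card hsub
    rwa [Finset.card_range] at this
  · intro h
    by_contra hlt
    push_neg at hlt
    have hsub : (Finset.range k).filter (fun x => m ≤ lamN lam x) ⊆ Finset.range i := by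
      intro x hx
      rw [Finset.mem_filter, Finset.mem_range] at hx
      rw [Finset.mem_range]
      by_contra hxi
      push_neg at hxi
      exact absurd (le_trans hx.2 (lamN_anti lam hmono hxi hx.1)) (not_le.2 hlt)
    have := Finset.card_le_card hsub
    rw [Finset.card_range] at this
    rw [conjN] at h
    omega

lemma lamN_bound (hbound : ∀ i : Fin k, lam i ≤ k - (i : ℕ)) {i : ℕ} (hi : i < k) :
    lamN lam i + i ≤ k := by
  have h := hbound ⟨i, hi⟩
  simp only [Fin.val_mk] at h
  simp only [lamN, dif_pos hi]
  omega

lemma gB_bound (hmono : Antitone lam) (hbound : ∀ i : Fin k, lam i ≤ k - (i : ℕ))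
    {j : ℕ} (hj : j ≤ k) : j + 1 + conjN lam (j + 1) ≤ k + 1 := by
  set c := conjN lam (j + 1) with hc
  rcases Nat.eq_zero_or_pos c with h0 | hpos
  · omega
  · have hck : c ≤ k := conjN_le lam _
    have hc1 : c - 1 < k := by omega
    have : j + 1 ≤ lamN lam (c - 1) := by
      rw [dual lam hmono hc1]
      omega
    have := lamN_bound lam hbound hc1
    omega

/-- Splitting a "count of `t ≤ g i`" into "count of `g i = t`" plus "count of `t+1 ≤ g i`". -/
lemma count_split (n t : ℕ) (g : ℕ → ℕ) :
    ((Finset.range n).filter (fun i => t ≤ g i)).card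
      = ((Finset.range n).filter (fun i => g i = t)).card
        + ((Finset.range n).filter (fun i => t + 1 ≤ g i)).card := by
  classical
  rw [← Finset.card_union_of_disjoint]
  · congr 1
    ext x
    simp only [Finset.mem_union, Finset.mem_filter, Finset.mem_range]
    omega
  · rw [Finset.disjoint_left]
    intro a ha hb
    rw [Finset.mem_filter] at ha hb
    omega

/-- The key counting identity. -/
lemma key (hmono : Antitone lam) (hbound : ∀ i : Fin k, lam i ≤ k - (i : ℕ))
    {t : ℕ} (ht : t ≤ k + 1) :
    ((Finset.range (k + 1)).filter (fun j => t ≤ j + 1 + conjN lam (j + 1))).card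
      = ((Finset.range k).filter (fun i => t ≤ i + 1 + lamN lam i)).card + 1 := by
  classical
  rcases t with _ | s
  · rw [Finset.filter_true_of_mem (fun x _ => Nat.zero_le _),
        Finset.filter_true_of_mem (fun x _ => Nat.zero_le _),
        Finset.card_range, Finset.card_range]
  · have hs : s ≤ k := by omega
    -- split the A side
    have hA : (Finset.range k).filter (fun i => s + 1 ≤ i + 1 + lamN lam i)
        = ((Finset.range s).filter (fun i => s ≤ i + lamN lam i)) ∪ Finset.Ico s k := by
      ext x
      simp only [Finset.mem_union, Finset.mem_filter, Finset.mem_range, Finset.mem_Ico]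
      omega
    have hB : (Finset.range (k + 1)).filter (fun j => s + 1 ≤ j + 1 + conjN lam (j + 1))
        = ((Finset.range s).filter (fun j => s ≤ j + conjN lam (j + 1)))
          ∪ Finset.Ico s (k + 1) := by
      ext x
      simp only [Finset.mem_union, Finset.mem_filter, Finset.mem_range, Finset.mem_Ico]
      omega
    have hdA : Disjoint ((Finset.range s).filter (fun i => s ≤ i + lamN lam i))
        (Finset.Ico s k) := by
      rw [Finset.disjoint_left]
      intro a ha hb
      rw [Finset.mem_filter, Finset.mem_range] at ha
      rw [Finset.mem_Ico] at hb
      omega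
    have hdB : Disjoint ((Finset.range s).filter (fun j => s ≤ j + conjN lam (j + 1)))
        (Finset.Ico s (k + 1)) := by
      rw [Finset.disjoint_left]
      intro a ha hb
      rw [Finset.mem_filter, Finset.mem_range] at ha
      rw [Finset.mem_Ico] at hb
      omega
    -- the two "small" parts have the same cardinality via j ↦ s - 1 - j
    have hbij : ((Finset.range s).filter (fun j => s ≤ j + conjN lam (j + 1))).card
        = ((Finset.range s).filter (fun i => s ≤ i + lamN lam i)).card := by
      apply Finset.card_bij' (fun j _ => s - 1 - j) (fun i _ => s - 1 - i)
      · intro a ha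
        rw [Finset.mem_filter, Finset.mem_range] at ha
        obtain ⟨has, hcond⟩ := ha
        have hik : s - 1 - a < k := by omega
        have : a + 1 ≤ lamN lam (s - 1 - a) := by
          rw [dual lam hmono hik]
          omega
        rw [Finset.mem_filter, Finset.mem_range]
        constructor
        · omega
        · omega
      · intro b hb
        rw [Finset.mem_filter, Finset.mem_range] at hb
        obtain ⟨hbs, hcond⟩ := hb
        have hbk : b < k := by omega
        have : (s - 1 - b) + 1 ≤ conjN lam ((s - 1 - b) + 1) + (s - 1 - b) + 1 := by omega
        have hdual : (s - 1 - b) + 1 ≤ lamN lam b → b + 1 ≤ conjN lam ((s - 1 - b) + 1) :=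
          (dual lam hmono hbk _).1
        have h2 : (s - 1 - b) + 1 ≤ lamN lam b := by omega
        have h3 := hdual h2
        rw [Finset.mem_filter, Finset.mem_range]
        constructor
        · omega
        · omega
      · intro a ha
        rw [Finset.mem_filter, Finset.mem_range] at ha
        omega
      · intro b hb
        rw [Finset.mem_filter, Finset.mem_range] at hb
        omega
    rw [hA, hB, Finset.card_union_of_disjoint hdA, Finset.card_union_of_disjoint hdB,
        hbij, Nat.card_Ico, Nat.card_Ico]
    omega

end Stmt2Aux

open Stmt2Aux in
/-- For a partition `λ` of format `(k+1) × k` with `λ_i ≤ k+1-i` (1-indexed), with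
transpose `λ^T`, one has `[k+1-λ_1]_q ⋯ [2-λ_k]_q = [k+1-λ^T_1]_q ⋯ [1-λ^T_{k+1}]_q`
as polynomials in `q` (i.e. for every natural number `q`). -/
theorem stmt2 (k : ℕ) (hk : 1 ≤ k) (lam : Fin k → ℕ) (hmono : Antitone lam)
    (hbound : ∀ i : Fin k, lam i ≤ k - (i : ℕ)) :
    ∀ q : ℕ,
      (∏ i : Fin k, qInt q (k + 1 - (i : ℕ) - lam i)) =
      ∏ j : Fin (k + 1), qInt q (k + 1 - (j : ℕ) -
        (Finset.univ.filter (fun i : Fin k => (j : ℕ) + 1 ≤ lam i)).card) := by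
  intro q
  classical
  -- grouping lemma: a product over `range n` of `qInt q (k+2 - g i)` with `g i ≤ k+1`
  -- equals the product over fibers
  have main : ∀ (n : ℕ) (g : ℕ → ℕ), (∀ i ∈ Finset.range n, g i ∈ Finset.range (k + 2)) →
      (∏ i ∈ Finset.range n, qInt q (k + 2 - g i))
        = ∏ t ∈ Finset.range (k + 2),
            (qInt q (k + 2 - t)) ^ (((Finset.range n).filter (fun i => g i = t)).card) := by
    intro n g hg
    rw [← Finset.prod_fiberwise_of_maps_to hg (fun i => qInt q (k + 2 - g i))]
    refine Finset.prod_congr rfl fun t _ => ?_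
    rw [← Finset.prod_const]
    refine Finset.prod_congr rfl fun x hx => ?_
    rw [(Finset.mem_filter.1 hx).2]
  -- the card in the statement is `conjN`
  have hcard : ∀ m : ℕ, (Finset.univ.filter (fun i : Fin k => m ≤ lam i)).card
      = conjN lam m := by
    intro m
    rw [conjN, Finset.card_filter, Finset.card_filter]
    rw [← Fin.sum_univ_eq_sum_range (fun n => if m ≤ lamN lam n then 1 else 0) k]
    refine Finset.sum_congr rfl fun i _ => ?_
    rw [lamN_coe]
  -- rewrite the LHS
  have lhs_eq : (∏ i : Fin k, qInt q (k + 1 - (i : ℕ) - lam i))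
      = ∏ i ∈ Finset.range k, qInt q (k + 2 - (i + 1 + lamN lam i)) := by
    rw [← Fin.prod_univ_eq_prod_range (fun i => qInt q (k + 2 - (i + 1 + lamN lam i))) k]
    refine Finset.prod_congr rfl fun i _ => ?_
    congr 1
    have h1 := lamN_coe lam i
    have h2 := lamN_bound lam hbound i.isLt
    omega
  -- rewrite the RHS
  have rhs_eq : (∏ j : Fin (k + 1), qInt q (k + 1 - (j : ℕ) -
        (Finset.univ.filter (fun i : Fin k => (j : ℕ) + 1 ≤ lam i)).card))
      = ∏ j ∈ Finset.range (k + 1), qInt q (k + 2 - (j + 1 + conjN lam (j + 1))) := by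
    rw [← Fin.prod_univ_eq_prod_range (fun j => qInt q (k + 2 - (j + 1 + conjN lam (j + 1)))) (k + 1)]
    refine Finset.prod_congr rfl fun j _ => ?_
    rw [hcard ((j : ℕ) + 1)]
    congr 1
    have h2 : (j : ℕ) + 1 + conjN lam ((j : ℕ) + 1) ≤ k + 1 :=
      gB_bound lam hmono hbound (Nat.lt_succ_iff.1 j.isLt)
    omega
  rw [lhs_eq, rhs_eq]
  have hgA : ∀ i ∈ Finset.range k, i + 1 + lamN lam i ∈ Finset.range (k + 2) := by
    intro i hi
    rw [Finset.mem_range] at hi ⊢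
    have := lamN_bound lam hbound hi
    omega
  have hgB : ∀ j ∈ Finset.range (k + 1), j + 1 + conjN lam (j + 1) ∈ Finset.range (k + 2) := by
    intro j hj
    rw [Finset.mem_range] at hj ⊢
    have := gB_bound lam hmono hbound (Nat.lt_succ_iff.1 hj)
    omega
  rw [main k (fun i => i + 1 + lamN lam i) hgA,
      main (k + 1) (fun j => j + 1 + conjN lam (j + 1)) hgB]
  refine Finset.prod_congr rfl fun t ht => ?_
  rw [Finset.mem_range] at ht
  rcases Nat.lt_or_ge t (k + 1) with htk | htk
  · -- t ≤ k : the fiber cardinalities agree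
    congr 1
    have eA := count_split k t (fun i => i + 1 + lamN lam i)
    have eB := count_split (k + 1) t (fun j => j + 1 + conjN lam (j + 1))
    have e3 := key lam hmono hbound (show t ≤ k + 1 by omega)
    have e4 := key lam hmono hbound (show t + 1 ≤ k + 1 by omega)
    omega
  · -- t = k + 1 : base is qInt q 1 = 1
    have htt : t = k + 1 := by omega
    subst htt
    have : k + 2 - (k + 1) = 1 := by omega
    rw [this]
    have h1 : qInt q 1 = 1 := by simp [qInt]
    rw [h1, one_pow, one_pow]
end

section
/- Fix k ≥ 1, integer partitions λ and μ of format (k+1)×k with μ ⊆ λ ⊆ Δ (i.e., λ_i ≤ k+1-i and μ_i ≤ k-i for all i ∈ [k]), and fix w ∈ S_{k+1} with w(i) ≤ k+1-λ_i for all i ∈ [k]. Then the number of (k+1)-cycles c ∈ S_{k+1} such that w(c(i)) ≤ k+1-μ_i for all i ∈ [k] equals (k-μ_1)(k-1-μ_2)···(1-μ_k), independently of the choice of w. -/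
/-!
Put `A_j = {x | w x < k + 1 - μ_j}`: then `#A_j = k + 1 - μ_j`, the `A_j` increase with `j`, and
`j ∈ A_j` because `w j < k + 1 - λ_j ≤ k + 1 - μ_j`. A full cycle `c` is determined by the
injective tuple `(c 0, …, c (k-1))`, and the tuples arising this way are exactly those whose
functional graph, with `k` as the only sink, has no cycle. Choose the tuple entry by entry: when
the value at `m` is chosen (positions `≥ m` still being sinks), it must avoid the `m` earlier
values and the points whose path runs into `m`. These are exactly `m + 1` points, all in `A_m`,
so there are `#A_m - (m + 1) = k - m - μ_m` choices, however the earlier entries were chosen.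
-/

open Finset Function Equiv

theorem Function.exists_iterate_eq_iterate_of_eqOn {α : Type*} {g g' : α → α} {P : α → Prop}
    (hgg' : ∀ y, ¬ P y → g' y = g y) {x : α} (h : ∃ t, P (g^[t] x)) :
    ∃ t, P (g^[t] x) ∧ g'^[t] x = g^[t] x := by
  classical
  refine ⟨Nat.find h, Nat.find_spec h, ?_⟩
  suffices ∀ s ≤ Nat.find h, g'^[s] x = g^[s] x from this _ le_rfl
  intro s hs
  induction s with
  | zero => rfl
  | succ s ih =>
    rw [iterate_succ_apply', iterate_succ_apply', ih (by omega),
      hgg' _ (Nat.find_min h (by omega))]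

theorem Equiv.Perm.eq_of_apply_castSucc_eq {k : ℕ} {σ τ : Perm (Fin (k + 1))}
    (h : ∀ i : Fin k, σ i.castSucc = τ i.castSucc) : σ = τ := by
  have hlast : σ (Fin.last k) = τ (Fin.last k) := by
    obtain ⟨y, hy⟩ := τ.surjective (σ (Fin.last k))
    induction y using Fin.lastCases with
    | last => exact hy.symm
    | cast i => exact absurd (σ.injective ((h i).trans hy)) (Fin.castSucc_ne_last i)
  ext x
  induction x using Fin.lastCases with
  | last => rw [hlast]
  | cast i => rw [h i]

namespace TupleGraph

variable {m n : ℕ}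

/-- A tuple `f : Fin m → Fin n` read as a self-map of `Fin n` whose points `≥ m` are sinks. -/
def extendId (f : Fin m → Fin n) (x : Fin n) : Fin n :=
  if h : (x : ℕ) < m then f ⟨x, h⟩ else x

def IsAcyclic (f : Fin m → Fin n) : Prop :=
  ∀ x, ∃ t, m ≤ ((extendId f)^[t] x : ℕ)

open scoped Classical in
noncomputable def reachSet (f : Fin m → Fin n) : Finset (Fin n) :=
  {v | ∃ t, ((extendId f)^[t] v : ℕ) = m}

open scoped Classical in
noncomputable def admissible (A : ℕ → Finset (Fin n)) (m : ℕ) : Finset (Fin m → Fin n) :=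
  {f | Injective f ∧ (∀ i : Fin m, f i ∈ A i) ∧ IsAcyclic f}

theorem extendId_of_lt {f : Fin m → Fin n} {x : Fin n} (h : (x : ℕ) < m) :
    extendId f x = f ⟨x, h⟩ := dif_pos h

theorem extendId_of_le {f : Fin m → Fin n} {x : Fin n} (h : m ≤ x) : extendId f x = x :=
  dif_neg h.not_gt

theorem extendId_init_of_ne {f : Fin (m + 1) → Fin n} {y : Fin n} (hy : (y : ℕ) ≠ m) :
    extendId (Fin.init f) y = extendId f y := by
  rcases lt_or_gt_of_ne hy with h | h
  · rw [extendId_of_lt h, extendId_of_lt (by omega)]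
    rfl
  · rw [extendId_of_le h.le, extendId_of_le h]

theorem extendId_snoc_of_ne {f : Fin m → Fin n} {v y : Fin n} (hy : (y : ℕ) ≠ m) :
    extendId (Fin.snoc f v : Fin (m + 1) → Fin n) y = extendId f y := by
  rw [← extendId_init_of_ne hy, Fin.init_snoc]

theorem extendId_snoc_of_eq {f : Fin m → Fin n} {v y : Fin n} (hy : (y : ℕ) = m) :
    extendId (Fin.snoc f v : Fin (m + 1) → Fin n) y = v := by
  rw [extendId_of_lt (by omega)]
  simp [Fin.snoc, hy]

theorem IsAcyclic.init {f : Fin (m + 1) → Fin n} (hf : IsAcyclic f) :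
    IsAcyclic (Fin.init f) := by
  intro x
  obtain ⟨t, ht, heq⟩ := exists_iterate_eq_iterate_of_eqOn
    (g := extendId f) (g' := extendId (Fin.init f)) (P := fun y : Fin n => m ≤ y)
    (fun y hy => extendId_init_of_ne (by omega)) (x := x)
    (let ⟨t, ht⟩ := hf x; ⟨t, by omega⟩)
  exact ⟨t, heq ▸ ht⟩

theorem mem_reachSet {f : Fin m → Fin n} {v : Fin n} :
    v ∈ reachSet f ↔ ∃ t, ((extendId f)^[t] v : ℕ) = m := by
  classical
  simp [reachSet]

theorem val_le_of_mem_reachSet {f : Fin m → Fin n} {v : Fin n} (hv : v ∈ reachSet f) :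
    (v : ℕ) ≤ m := by
  by_contra h
  obtain ⟨t, ht⟩ := mem_reachSet.mp hv
  rw [iterate_fixed (extendId_of_le (by omega))] at ht
  omega

theorem extendId_mem_reachSet {f : Fin m → Fin n} {x : Fin n} (hx : x ∈ reachSet f)
    (hxm : (x : ℕ) ≠ m) : extendId f x ∈ reachSet f := by
  obtain ⟨_ | t, ht⟩ := mem_reachSet.mp hx
  · exact absurd ht hxm
  · exact mem_reachSet.mpr ⟨t, by rwa [← iterate_succ_apply]⟩

theorem val_lt_of_mem_reachSet_erase {f : Fin m → Fin n} {hm : m < n} {x : Fin n}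
    (hx : x ∈ (reachSet f).erase ⟨m, hm⟩) : (x : ℕ) < m := by
  obtain ⟨hxm, hx⟩ := mem_erase.mp hx
  have := val_le_of_mem_reachSet hx
  have : (x : ℕ) ≠ m := fun h => hxm (Fin.ext h)
  omega

theorem card_image_union_reachSet {f : Fin m → Fin n} (hm : m < n) (hf : Injective f) :
    #(univ.image f ∪ reachSet f) = m + 1 := by
  classical
  have hsink : (⟨m, hm⟩ : Fin n) ∈ reachSet f := mem_reachSet.mpr ⟨0, rfl⟩
  have hbij : #((reachSet f).erase ⟨m, hm⟩) = #(reachSet f ∩ univ.image f) := by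
    refine card_nbij (extendId f) (fun x hx => ?_) (fun x hx y hy hxy => ?_) (fun y hy => ?_)
    · have hlt := val_lt_of_mem_reachSet_erase hx
      refine mem_inter.mpr ⟨extendId_mem_reachSet (mem_of_mem_erase hx) hlt.ne, ?_⟩
      rw [extendId_of_lt hlt]
      exact mem_image_of_mem f (mem_univ _)
    · rw [extendId_of_lt (val_lt_of_mem_reachSet_erase hx),
        extendId_of_lt (val_lt_of_mem_reachSet_erase hy)] at hxy
      exact Fin.ext (Fin.mk.inj_iff.mp (hf hxy))
    · obtain ⟨hy, hyf⟩ := mem_inter.mp hy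
      obtain ⟨j, -, rfl⟩ := mem_image.mp hyf
      have hj : extendId f ⟨j, by omega⟩ = f j :=
        extendId_of_lt (f := f) (x := ⟨j, by omega⟩) j.isLt
      refine ⟨⟨j, by omega⟩, mem_erase.mpr ⟨fun h => ?_, ?_⟩, hj⟩
      · exact absurd (Fin.mk.inj_iff.mp h) j.isLt.ne
      · obtain ⟨t, ht⟩ := mem_reachSet.mp hy
        exact mem_reachSet.mpr ⟨t + 1, by rwa [iterate_succ_apply, hj]⟩
  have := card_union_add_card_inter (univ.image f) (reachSet f)
  rw [card_image_of_injective _ hf, card_univ, Fintype.card_fin, inter_comm, ← hbij,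
    card_erase_of_mem hsink] at this
  have := card_pos.mpr ⟨_, hsink⟩
  omega

theorem isAcyclic_snoc_iff {f : Fin m → Fin n} {v : Fin n} :
    IsAcyclic (Fin.snoc f v : Fin (m + 1) → Fin n) ↔ IsAcyclic f ∧ v ∉ reachSet f := by
  set g' := extendId (Fin.snoc f v : Fin (m + 1) → Fin n)
  have hg'_of_ne (y : Fin n) (hy : (y : ℕ) ≠ m) : g' y = extendId f y := extendId_snoc_of_ne hy
  have hg'_of_eq (y : Fin n) (hy : (y : ℕ) = m) : g' y = v := extendId_snoc_of_eq hy
  constructor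
  · intro hac
    refine ⟨by simpa only [Fin.init_snoc] using hac.init, fun hv => ?_⟩
    -- the trajectory of `v` to the sink `m` is closed into a cycle by `m ↦ v`
    have htraj : ∀ t, g'^[t] v ∈ reachSet f := by
      intro t
      induction t with
      | zero => exact hv
      | succ t ih =>
        rw [iterate_succ_apply']
        by_cases h : ((g'^[t] v : Fin n) : ℕ) = m
        · rwa [hg'_of_eq _ h]
        · rw [hg'_of_ne _ h]
          exact extendId_mem_reachSet ih h
    obtain ⟨t, ht⟩ : ∃ t, m + 1 ≤ (g'^[t] v : ℕ) := hac v
    have := val_le_of_mem_reachSet (htraj t)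
    omega
  · rintro ⟨hac, hv⟩ x
    have hagree (y : Fin n) :
        ∃ t, m ≤ ((extendId f)^[t] y : ℕ) ∧ g'^[t] y = (extendId f)^[t] y :=
      exists_iterate_eq_iterate_of_eqOn (P := fun z : Fin n => m ≤ z)
        (fun z hz => hg'_of_ne z (by omega)) (hac y)
    obtain ⟨t, ht, hxt⟩ := hagree x
    rcases ht.lt_or_eq with ht | ht
    · exact ⟨t, by rw [hxt]; exact ht⟩
    obtain ⟨s, hs, hvs⟩ := hagree v
    have hs : m < ((extendId f)^[s] v : ℕ) :=
      hs.lt_of_ne fun h => hv (mem_reachSet.mpr ⟨s, h.symm⟩)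
    refine ⟨s + (t + 1), show m + 1 ≤ (g'^[s + (t + 1)] x : ℕ) from ?_⟩
    rw [iterate_add_apply, iterate_succ_apply', hxt, hg'_of_eq _ ht.symm, hvs]
    exact hs

theorem mem_admissible {A : ℕ → Finset (Fin n)} {f : Fin m → Fin n} :
    f ∈ admissible A m ↔ Injective f ∧ (∀ i : Fin m, f i ∈ A i) ∧ IsAcyclic f := by
  classical
  simp [admissible]

theorem snoc_mem_admissible_iff {A : ℕ → Finset (Fin n)} {f : Fin m → Fin n} {v : Fin n} :
    (Fin.snoc f v : Fin (m + 1) → Fin n) ∈ admissible A (m + 1) ↔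
      f ∈ admissible A m ∧ v ∈ A m \ (univ.image f ∪ reachSet f) := by
  simp only [mem_admissible, Fin.snoc_injective_iff, Fin.forall_fin_succ', Fin.snoc_castSucc,
    Fin.snoc_last, Fin.val_castSucc, Fin.val_last, isAcyclic_snoc_iff, mem_sdiff, mem_union,
    mem_image, mem_univ, true_and, Set.mem_range]
  tauto

theorem card_admissible_succ {A : ℕ → Finset (Fin n)} (hm : m < n)
    (hA : ∀ i < m, A i ⊆ A m) (hself : ∀ x : Fin n, (x : ℕ) ≤ m → x ∈ A m) :
    #(admissible A (m + 1)) = #(admissible A m) * (#(A m) - (m + 1)) := by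
  rw [card_eq_sum_card_fiberwise (f := Fin.init) (t := admissible A m) fun f hf =>
    (snoc_mem_admissible_iff.mp (Fin.snoc_init_self f ▸ hf)).1, ← smul_eq_mul, ← sum_const]
  refine sum_congr rfl fun f hf => ?_
  obtain ⟨hinj, hfA, -⟩ := mem_admissible.mp hf
  have hsub : univ.image f ∪ reachSet f ⊆ A m := union_subset
    (image_subset_iff.mpr fun i _ => hA i i.isLt (hfA i))
    (fun x hx => hself x (val_le_of_mem_reachSet hx))
  have hcard := card_sdiff_of_subset hsub
  rw [card_image_union_reachSet hm hinj] at hcard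
  rw [← hcard]
  refine card_nbij' (fun f' => f' (Fin.last m)) (fun v => Fin.snoc f v) (fun f' hf' => ?_)
    (fun v hv => ?_) (fun f' hf' => ?_) (fun v _ => by simp)
  · obtain ⟨hadm, rfl⟩ := mem_filter.mp hf'
    rw [← Fin.snoc_init_self f'] at hadm
    exact (snoc_mem_admissible_iff.mp hadm).2
  · exact mem_filter.mpr ⟨snoc_mem_admissible_iff.mpr ⟨hf, hv⟩, Fin.init_snoc _ _⟩
  · obtain ⟨-, rfl⟩ := mem_filter.mp hf'
    exact Fin.snoc_init_self f'

theorem card_admissible {A : ℕ → Finset (Fin n)} {k : ℕ} (hk : k ≤ n)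
    (hA : MonotoneOn A (Set.Iio k)) (hself : ∀ x : Fin n, (x : ℕ) < k → x ∈ A x) :
    #(admissible A k) = ∏ i ∈ range k, (#(A i) - (i + 1)) := by
  suffices ∀ m ≤ k, #(admissible A m) = ∏ i ∈ range m, (#(A i) - (i + 1)) from this k le_rfl
  intro m hm
  induction m with
  | zero =>
    have : admissible A 0 = univ := eq_univ_of_forall fun f =>
      mem_admissible.mpr ⟨fun i => i.elim0, fun i => i.elim0, fun _ => ⟨0, Nat.zero_le _⟩⟩
    simp [this]
  | succ m ih =>
    rw [prod_range_succ, ← ih (by omega)]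
    refine card_admissible_succ (by omega) (fun i hi => hA (by simp; omega) (by simp; omega)
      hi.le) (fun x hx => hA (by simp; omega) (by simp; omega) hx (hself x (by omega)))

theorem IsAcyclic.exists_isCycle {k : ℕ} (hk : 1 ≤ k) {f : Fin k → Fin (k + 1)}
    (hinj : Injective f) (hac : IsAcyclic f) :
    ∃ c : Perm (Fin (k + 1)), c.IsCycle ∧ c.support = univ ∧ ∀ i, c i.castSucc = f i := by
  obtain ⟨v, hv⟩ : ∃ v, v ∉ Set.range f := by
    by_contra! h
    have := Fintype.card_le_of_surjective f h
    simp at this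
  have hbij : Bijective (Fin.snoc f v : Fin (k + 1) → Fin (k + 1)) :=
    Finite.injective_iff_bijective.mp (Fin.snoc_injective_iff.mpr ⟨hinj, hv⟩)
  set c : Perm (Fin (k + 1)) := Equiv.ofBijective _ hbij
  have hc : ∀ i, c i.castSucc = f i := fun i => Fin.snoc_castSucc (α := fun _ => Fin (k + 1)) ..
  have hreach : ∀ x, ∃ t, c^[t] x = Fin.last k := by
    intro x
    obtain ⟨t, ht, heq⟩ := exists_iterate_eq_iterate_of_eqOn (g := extendId f) (g' := c)
      (P := fun z : Fin (k + 1) => k ≤ z) (x := x) (fun z hz => by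
        rw [extendId_of_lt (by omega), ← hc]; rfl) (hac x)
    exact ⟨t, Fin.ext (by rw [heq, Fin.val_last]; have := ((extendId f)^[t] x).isLt; omega)⟩
  -- if `last` were fixed, no other point (such as `0`) could reach it
  have hlast : c (Fin.last k) ≠ Fin.last k := by
    intro h
    obtain ⟨t, ht⟩ := hreach 0
    rw [← iterate_fixed h t] at ht
    exact Fin.ext_iff.not.mpr (by simp; omega) ((c.injective.iterate t) ht)
  have hsupp : c.support = univ := eq_univ_of_forall fun x => Perm.mem_support.mpr fun hx => by
    obtain ⟨t, ht⟩ := hreach x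
    rw [iterate_fixed hx] at ht
    exact hlast (ht ▸ hx)
  refine ⟨c, ⟨Fin.last k, hlast, fun y _ => ?_⟩, hsupp, hc⟩
  obtain ⟨t, ht⟩ := hreach y
  exact Perm.SameCycle.symm ⟨t, by rw [zpow_natCast, Perm.coe_pow, ht]⟩

end TupleGraph

open TupleGraph

theorem Equiv.Perm.IsCycle.isAcyclic_apply_castSucc {k : ℕ} {c : Perm (Fin (k + 1))}
    (hc : c.IsCycle) (hsupp : c.support = univ) : IsAcyclic fun i : Fin k => c i.castSucc := by
  intro x
  obtain ⟨t, ht⟩ := hc.exists_pow_eq (Perm.mem_support.mp (hsupp ▸ mem_univ x))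
    (Perm.mem_support.mp (hsupp ▸ mem_univ (Fin.last k)))
  obtain ⟨s, hs, heq⟩ := exists_iterate_eq_iterate_of_eqOn (g := c)
    (g' := extendId fun i : Fin k => c i.castSucc) (P := fun z : Fin (k + 1) => k ≤ z)
    (fun z hz => by rw [extendId_of_lt (by omega)]; rfl) (x := x)
    ⟨t, by rw [← Perm.coe_pow, ht, Fin.val_last]⟩
  exact ⟨s, heq ▸ hs⟩

open scoped Classical in
theorem card_isCycle_apply_castSucc_mem {k : ℕ} (hk : 1 ≤ k)
    (A : ℕ → Finset (Fin (k + 1))) :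
    #{c : Perm (Fin (k + 1)) | c.IsCycle ∧ c.support.card = k + 1 ∧
      ∀ i : Fin k, c i.castSucc ∈ A i} = #(admissible A k) := by
  have hsupp (c : Perm (Fin (k + 1))) : c.support.card = k + 1 ↔ c.support = univ := by
    rw [← card_eq_iff_eq_univ, Fintype.card_fin]
  refine card_bij (fun c _ i => c i.castSucc) (fun c hc => ?_)
    (fun σ _ τ _ h => Perm.eq_of_apply_castSucc_eq (congrFun h)) (fun f hf => ?_)
  · obtain ⟨hcyc, hcard, hA⟩ := (mem_filter.mp hc).2
    exact mem_admissible.mpr ⟨fun i j h => Fin.castSucc_injective k (c.injective h), hA,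
      hcyc.isAcyclic_apply_castSucc ((hsupp _).mp hcard)⟩
  · obtain ⟨hinj, hA, hac⟩ := mem_admissible.mp hf
    obtain ⟨c, hcyc, hcsupp, hc⟩ := hac.exists_isCycle hk hinj
    exact ⟨c, mem_filter.mpr ⟨mem_univ _, hcyc, (hsupp c).mpr hcsupp, fun i => hc i ▸ hA i⟩,
      funext hc⟩

theorem card_filter_val_perm_apply_lt {n : ℕ} (w : Perm (Fin n)) (q : ℕ) :
    #{x : Fin n | (w x : ℕ) < q} = min n q := by
  rw [← Fin.card_filter_val_lt]
  exact card_equiv w fun x => by simp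

theorem stmt7_general (k : ℕ) (hk : 1 ≤ k) (lam mu : Fin k → ℕ)
    (hmmono : Antitone mu)
    (hml : ∀ i : Fin k, mu i ≤ lam i)
    (w : Equiv.Perm (Fin (k + 1)))
    (hw : ∀ i : Fin k, (w i.castSucc : ℕ) + 1 ≤ k + 1 - lam i) :
    Nat.card {c : Equiv.Perm (Fin (k + 1)) //
        c.IsCycle ∧ c.support.card = k + 1 ∧
        ∀ i : Fin k, (w (c i.castSucc) : ℕ) + 1 ≤ k + 1 - mu i} =
      ∏ i : Fin k, (k - (i : ℕ) - mu i) := by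
  classical
  set A : ℕ → Finset (Fin (k + 1)) :=
    fun j => if h : j < k then univ.filter fun x => (w x : ℕ) < k + 1 - mu ⟨j, h⟩ else ∅
  have hA (i : Fin k) : A i = univ.filter fun x => (w x : ℕ) < k + 1 - mu i := dif_pos i.isLt
  have hmono : MonotoneOn A (Set.Iio k) := fun i hi j hj hij x hx => by
    simp only [A, dif_pos (show i < k from hi), dif_pos (show j < k from hj), mem_filter,
      mem_univ, true_and] at hx ⊢
    have := hmmono (show (⟨i, hi⟩ : Fin k) ≤ ⟨j, hj⟩ from hij)
    omega
  have hself (x : Fin (k + 1)) (hx : (x : ℕ) < k) : x ∈ A x := by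
    have hwx := hw ⟨x, hx⟩
    have := hml ⟨x, hx⟩
    simp only [Fin.castSucc_mk, Fin.eta] at hwx
    simp only [A, dif_pos hx, mem_filter, mem_univ, true_and]
    omega
  rw [Nat.card_eq_fintype_card, Fintype.card_subtype]
  calc _ = #{c : Perm (Fin (k + 1)) | c.IsCycle ∧ c.support.card = k + 1 ∧
          ∀ i : Fin k, c i.castSucc ∈ A i} := by
        congr! 6 with c i
        simp only [hA, mem_filter, mem_univ, true_and]
        omega
    _ = ∏ i ∈ range k, (#(A i) - (i + 1)) := by
        rw [card_isCycle_apply_castSucc_mem hk, card_admissible k.le_succ hmono hself]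
    _ = _ := by
        rw [← Fin.prod_univ_eq_prod_range]
        refine prod_congr rfl fun i _ => ?_
        rw [hA, card_filter_val_perm_apply_lt]
        omega

/-- Fix partitions `μ ⊆ λ ⊆ Δ` and `w ∈ S_{k+1}` with `w(i) ≤ k+1-λ_i`.  The number
of `(k+1)`-cycles `c ∈ S_{k+1}` such that `w(c(i)) ≤ k+1-μ_i` for all `i ∈ [k]`
equals `(k-μ_1)(k-1-μ_2)⋯(1-μ_k)`, independently of `w`. (0-indexed.) -/
theorem stmt7 (k : ℕ) (hk : 1 ≤ k) (lam mu : Fin k → ℕ)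
    (hlmono : Antitone lam) (hmmono : Antitone mu)
    (hlb : ∀ i : Fin k, lam i ≤ k - (i : ℕ))
    (hmb : ∀ i : Fin k, mu i ≤ k - ((i : ℕ) + 1))
    (hml : ∀ i : Fin k, mu i ≤ lam i)
    (w : Equiv.Perm (Fin (k + 1)))
    (hw : ∀ i : Fin k, (w i.castSucc : ℕ) + 1 ≤ k + 1 - lam i) :
    Nat.card {c : Equiv.Perm (Fin (k + 1)) //
        c.IsCycle ∧ c.support.card = k + 1 ∧
        ∀ i : Fin k, (w (c i.castSucc) : ℕ) + 1 ≤ k + 1 - mu i} =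
      ∏ i : Fin k, (k - (i : ℕ) - mu i) :=
  stmt7_general k hk lam mu hmmono hml w hw
end

section
/- Let U be the group of invertible upper triangular n×n matrices over a field F, and L the group of invertible lower triangular matrices over F. For any M ∈ GL_n(F), there exist unique w ∈ S_n, B ∈ U, and A ∈ w_* such that M = B·A, where w_* is the set of matrices with A_{w(i),i} = 1 for all i, A_{w(i),j} arbitrary whenever i < j and w(i) > w(j), and all other entries zero. (Bruhat decomposition in concrete form.) -/
/-!
Write `M = B * A`. Since `B` is upper triangular, the last row of `M` is `B (last n) (last n)`
times the last row of `A`, whose first nonzero entry is the `1` in column `w⁻¹ (last n)`. Hence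
`w⁻¹ (last n)` is the column `i0` of the first nonzero entry `p` of the last row of `M`, the last
row of `A` is that of `M` divided by `p`, column `i0` of `A` is the last unit vector, and the last
column of `B` is column `i0` of `M`. Deleting the last row and column `i0` turns a factorization of
`M` into one of the Schur complement of `p`, an invertible matrix of size one less, and every
factorization of that complement extends back; induction on `n` gives existence and uniqueness
together.
-/

open Matrix Fin Equiv

namespace Bruhat

variable {n : ℕ}

/-- `A ∈ w_*` in the notation of the paper. -/
def IsSEAugmented {R : Type*} [Zero R] [One R] (w : Perm (Fin n)) (A : Matrix (Fin n) (Fin n) R) :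
    Prop :=
  (∀ i, A (w i) i = 1) ∧ ∀ i j, j ≠ i → ¬(i < j ∧ w j < w i) → A (w i) j = 0

namespace IsSEAugmented

variable {R : Type*} [Zero R] [One R] {w : Perm (Fin n)} {A : Matrix (Fin n) (Fin n) R}
  {i j : Fin n}

theorem apply_eq_zero_of_lt (hA : IsSEAugmented w A) (h : j < i) : A (w i) j = 0 :=
  hA.2 i j h.ne fun h' => h'.1.not_gt h

theorem apply_eq_zero_of_apply_lt (hA : IsSEAugmented w A) (h : w i < w j) : A (w i) j = 0 :=
  hA.2 i j (by rintro rfl; exact h.false) fun h' => h'.2.not_gt h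

theorem isLeast_ne_zero [NeZero (1 : R)] (hA : IsSEAugmented w A) (i : Fin n) :
    IsLeast {j | A (w i) j ≠ 0} i :=
  ⟨by simp [hA.1 i], fun _ hj => not_lt.1 fun h => hj (hA.apply_eq_zero_of_lt h)⟩

end IsSEAugmented

def extendPerm (w : Perm (Fin n)) (i0 : Fin (n + 1)) : Perm (Fin (n + 1)) :=
  (finSuccEquiv' i0).trans (w.optionCongr.trans (finSuccEquiv' (last n)).symm)

@[simp]
theorem extendPerm_apply_self (w : Perm (Fin n)) (i0 : Fin (n + 1)) :
    extendPerm w i0 i0 = last n := by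
  simp [extendPerm]

@[simp]
theorem extendPerm_apply_succAbove (w : Perm (Fin n)) (i0 : Fin (n + 1)) (j : Fin n) :
    extendPerm w i0 (i0.succAbove j) = (w j).castSucc := by
  simp [extendPerm]

theorem exists_extendPerm_eq {w : Perm (Fin (n + 1))} {i0 : Fin (n + 1)} (h : w i0 = last n) :
    ∃ w', extendPerm w' i0 = w := by
  set e : Perm (Option (Fin n)) :=
    (finSuccEquiv' i0).symm.trans (w.trans (finSuccEquiv' (last n)))
  have he : e none = none := by simp [e, h]
  have he' : (removeNone e).optionCongr = e := by simp [he, Perm.one_def]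
  exact ⟨removeNone e, Equiv.ext fun x => by simp [extendPerm, he', e]⟩

section Extend

variable {R : Type*} [CommRing R]

def extendUpper (B : Matrix (Fin n) (Fin n) R) (c : Fin (n + 1) → R) :
    Matrix (Fin (n + 1)) (Fin (n + 1)) R :=
  of fun r k => lastCases (c r) (fun k => lastCases 0 (fun r => B r k) r) k

variable {B : Matrix (Fin n) (Fin n) R} {c : Fin (n + 1) → R}

@[simp]
theorem extendUpper_apply_last (r : Fin (n + 1)) : extendUpper B c r (last n) = c r := by
  simp [extendUpper]

@[simp]
theorem extendUpper_last_castSucc (k : Fin n) : extendUpper B c (last n) k.castSucc = 0 := by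
  simp [extendUpper]

@[simp]
theorem extendUpper_castSucc_castSucc (r k : Fin n) :
    extendUpper B c r.castSucc k.castSucc = B r k := by
  simp [extendUpper]

@[simp]
theorem submatrix_extendUpper : (extendUpper B c).submatrix castSucc castSucc = B := by
  ext; simp

theorem extendUpper_submatrix {B : Matrix (Fin (n + 1)) (Fin (n + 1)) R}
    (h : ∀ k : Fin n, B (last n) k.castSucc = 0) :
    extendUpper (B.submatrix castSucc castSucc) (fun r => B r (last n)) = B := by
  ext r k
  induction k using lastCases with
  | last => simp
  | cast k => induction r using lastCases with
    | last => simp [h]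
    | cast r => simp

theorem det_extendUpper : (extendUpper B c).det = c (last n) * B.det := by
  rw [det_succ_row _ (last n), sum_univ_castSucc]
  simp [succAbove_last]

theorem isUnit_extendUpper_iff (hc : IsUnit (c (last n))) :
    IsUnit (extendUpper B c) ↔ IsUnit B := by
  rw [isUnit_iff_isUnit_det, isUnit_iff_isUnit_det B, det_extendUpper, IsUnit.mul_iff,
    and_iff_right hc]

theorem blockTriangular_extendUpper_iff :
    (extendUpper B c).BlockTriangular id ↔ B.BlockTriangular id := by
  constructor
  · intro h r k hkr
    simpa using h (i := r.castSucc) (j := k.castSucc) (castSucc_lt_castSucc_iff.2 hkr)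
  · intro h r k hkr
    induction k using lastCases with
    | last => exact absurd hkr (not_lt.2 (le_last r))
    | cast k => induction r using lastCases with
      | last => simp
      | cast r => simpa using h (castSucc_lt_castSucc_iff.1 hkr)

def extendAugmented (A : Matrix (Fin n) (Fin n) R) (i0 : Fin (n + 1)) (a : Fin (n + 1) → R) :
    Matrix (Fin (n + 1)) (Fin (n + 1)) R :=
  of fun r => lastCases a (fun r => i0.insertNth (α := fun _ => R) 0 (A r)) r

variable {A : Matrix (Fin n) (Fin n) R} {i0 : Fin (n + 1)} {a : Fin (n + 1) → R}

@[simp]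
theorem extendAugmented_last (k : Fin (n + 1)) : extendAugmented A i0 a (last n) k = a k := by
  simp [extendAugmented]

@[simp]
theorem extendAugmented_castSucc_self (r : Fin n) :
    extendAugmented A i0 a r.castSucc i0 = 0 := by
  simp [extendAugmented]

@[simp]
theorem extendAugmented_castSucc_succAbove (r j : Fin n) :
    extendAugmented A i0 a r.castSucc (i0.succAbove j) = A r j := by
  simp [extendAugmented]

@[simp]
theorem submatrix_extendAugmented :
    (extendAugmented A i0 a).submatrix castSucc i0.succAbove = A := by
  ext; simp

theorem extendAugmented_submatrix {A : Matrix (Fin (n + 1)) (Fin (n + 1)) R}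
    (h : ∀ r : Fin n, A r.castSucc i0 = 0) :
    extendAugmented (A.submatrix castSucc i0.succAbove) i0 (A (last n)) = A := by
  ext r k
  induction r using lastCases with
  | last => simp
  | cast r => obtain rfl | ⟨k, rfl⟩ := eq_self_or_eq_succAbove i0 k <;> simp [h]

theorem det_extendAugmented :
    (extendAugmented A i0 a).det = (-1) ^ (n + i0 : ℕ) * a i0 * A.det := by
  rw [det_succ_column _ i0, sum_univ_castSucc]
  simp [succAbove_last]

theorem isSEAugmented_extend_iff {w : Perm (Fin n)} (h1 : a i0 = 1) (h0 : ∀ k < i0, a k = 0) :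
    IsSEAugmented (extendPerm w i0) (extendAugmented A i0 a) ↔ IsSEAugmented w A := by
  constructor
  · intro hA
    refine ⟨fun i => by simpa using hA.1 (i0.succAbove i), fun i j hji hinv => ?_⟩
    simpa using hA.2 (i0.succAbove i) (i0.succAbove j) (succAbove_right_injective.ne hji)
      (by simpa [succAbove_lt_succAbove_iff] using hinv)
  · intro hA
    refine ⟨fun i => ?_, fun i j hji hinv => ?_⟩
    · obtain hi | ⟨i, rfl⟩ := eq_self_or_eq_succAbove i0 i
      · subst i
        simp [h1]
      · simp [hA.1]
    · obtain hi | ⟨i, rfl⟩ := eq_self_or_eq_succAbove i0 i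
      · subst i
        obtain hj | ⟨j, rfl⟩ := eq_self_or_eq_succAbove i0 j
        · exact absurd hj hji
        · simp only [extendPerm_apply_self, extendPerm_apply_succAbove, castSucc_lt_last,
            and_true, not_lt] at hinv
          simpa using h0 _ (hinv.lt_of_ne hji)
      · obtain rfl | ⟨j, rfl⟩ := eq_self_or_eq_succAbove i0 j
        · simp
        · simpa using hA.2 i j (by rintro rfl; exact hji rfl)
            (by simpa [succAbove_lt_succAbove_iff] using hinv)

theorem mul_apply_last_of_blockTriangular {B A : Matrix (Fin (n + 1)) (Fin (n + 1)) R}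
    (hB : B.BlockTriangular id) (k : Fin (n + 1)) :
    (B * A) (last n) k = B (last n) (last n) * A (last n) k := by
  rw [mul_apply, sum_univ_castSucc,
    Finset.sum_eq_zero fun j _ => by rw [hB (i := last n) (j := j.castSucc) (castSucc_lt_last j),
      zero_mul], zero_add]

end Extend

variable {F : Type*} [Field F]

/-- Clearing column `i0` with the pivot `M (last n) i0` by row operations, then deleting the last
row and column `i0`. -/
def pivotSchurComplement (M : Matrix (Fin (n + 1)) (Fin (n + 1)) F) (i0 : Fin (n + 1)) :
    Matrix (Fin n) (Fin n) F :=
  of fun r j => M r.castSucc (i0.succAbove j) -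
    M r.castSucc i0 / M (last n) i0 * M (last n) (i0.succAbove j)

theorem eq_extendUpper_mul_extendAugmented_iff {M : Matrix (Fin (n + 1)) (Fin (n + 1)) F}
    {i0 : Fin (n + 1)} (hp : M (last n) i0 ≠ 0) (B A : Matrix (Fin n) (Fin n) F) :
    M = extendUpper B (fun r => M r i0) *
        extendAugmented A i0 (fun k => M (last n) k / M (last n) i0) ↔
      pivotSchurComplement M i0 = B * A := by
  set P := extendUpper B (fun r => M r i0) *
    extendAugmented A i0 (fun k => M (last n) k / M (last n) i0)
  have hP_last : ∀ k, P (last n) k = M (last n) k := fun k => by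
    simp [P, mul_apply, sum_univ_castSucc]
    field_simp
  have hP_pivot : ∀ r : Fin n, P r.castSucc i0 = M r.castSucc i0 := fun r => by
    simp [P, mul_apply, sum_univ_castSucc, hp]
  have hP_minor : ∀ r j, P r.castSucc (i0.succAbove j) =
      (B * A) r j + M r.castSucc i0 / M (last n) i0 * M (last n) (i0.succAbove j) := fun r j => by
    simp [P, mul_apply, sum_univ_castSucc]
    ring
  constructor
  · intro h
    ext r j
    have hM_minor := hP_minor r j
    rw [← h] at hM_minor
    rw [pivotSchurComplement, of_apply, hM_minor, add_sub_cancel_right]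
  · intro h
    ext r k
    induction r using lastCases with
    | last => exact (hP_last k).symm
    | cast r =>
      obtain rfl | ⟨j, rfl⟩ := eq_self_or_eq_succAbove i0 k
      · exact (hP_pivot r).symm
      · rw [hP_minor, ← h, pivotSchurComplement, of_apply, sub_add_cancel]

theorem isUnit_pivotSchurComplement {M : Matrix (Fin (n + 1)) (Fin (n + 1)) F}
    {i0 : Fin (n + 1)} (hM : IsUnit M) (hp : M (last n) i0 ≠ 0) :
    IsUnit (pivotSchurComplement M i0) := by
  have h := (eq_extendUpper_mul_extendAugmented_iff hp 1 _).2 (one_mul _).symm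
  rw [isUnit_iff_isUnit_det, h, det_mul, det_extendUpper, det_extendAugmented,
    ← mul_assoc] at hM
  exact (isUnit_iff_isUnit_det _).2 (isUnit_of_mul_isUnit_right hM)

theorem exists_isLeast_lastRow_ne_zero {M : Matrix (Fin (n + 1)) (Fin (n + 1)) F}
    (hM : IsUnit M) : ∃ i0, IsLeast {k | M (last n) k ≠ 0} i0 := by
  obtain ⟨k, hk⟩ : ∃ k, M (last n) k ≠ 0 := by
    by_contra! h
    exact isUnit_iff_ne_zero.1 ((isUnit_iff_isUnit_det M).1 hM) (det_eq_zero_of_row_eq_zero _ h)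
  exact ⟨_, isLeast_csInf ⟨k, hk⟩⟩

def IsFactorization (M : Matrix (Fin n) (Fin n) F)
    (t : Perm (Fin n) × Matrix (Fin n) (Fin n) F × Matrix (Fin n) (Fin n) F) : Prop :=
  (IsUnit t.2.1 ∧ t.2.1.BlockTriangular id) ∧ IsSEAugmented t.1 t.2.2 ∧ M = t.2.1 * t.2.2

def extend (M : Matrix (Fin (n + 1)) (Fin (n + 1)) F) (i0 : Fin (n + 1))
    (t : Perm (Fin n) × Matrix (Fin n) (Fin n) F × Matrix (Fin n) (Fin n) F) :
    Perm (Fin (n + 1)) × Matrix (Fin (n + 1)) (Fin (n + 1)) F ×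
      Matrix (Fin (n + 1)) (Fin (n + 1)) F :=
  (extendPerm t.1 i0, extendUpper t.2.1 (fun r => M r i0),
    extendAugmented t.2.2 i0 (fun k => M (last n) k / M (last n) i0))

section Pivot

variable {M : Matrix (Fin (n + 1)) (Fin (n + 1)) F} {i0 : Fin (n + 1)}
  (hi0 : IsLeast {k | M (last n) k ≠ 0} i0)
include hi0

theorem isFactorization_extend_iff
    (t : Perm (Fin n) × Matrix (Fin n) (Fin n) F × Matrix (Fin n) (Fin n) F) :
    IsFactorization M (extend M i0 t) ↔ IsFactorization (pivotSchurComplement M i0) t := by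
  have hp : M (last n) i0 ≠ 0 := hi0.1
  have h0 : ∀ k < i0, M (last n) k / M (last n) i0 = 0 := fun k hk => by
    rw [not_ne_iff.1 fun hk' => (hi0.2 hk').not_gt hk, zero_div]
  simp only [IsFactorization, extend, isUnit_extendUpper_iff (c := fun r => M r i0) hp.isUnit,
    blockTriangular_extendUpper_iff, isSEAugmented_extend_iff (div_self hp) h0,
    eq_extendUpper_mul_extendAugmented_iff hp]

theorem IsFactorization.apply_pivot_eq_last {w : Perm (Fin (n + 1))}
    {B A : Matrix (Fin (n + 1)) (Fin (n + 1)) F} (ht : IsFactorization M (w, B, A)) :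
    w i0 = last n := by
  obtain ⟨⟨-, hB : B.BlockTriangular id⟩, hA : IsSEAugmented w A, rfl : M = B * A⟩ := ht
  have hpiv : (B * A) (last n) i0 ≠ 0 := hi0.1
  rw [mul_apply_last_of_blockTriangular hB] at hpiv
  have hB_last : B (last n) (last n) ≠ 0 := left_ne_zero_of_mul hpiv
  have hM_row : {k | (B * A) (last n) k ≠ 0} = {k | A (last n) k ≠ 0} := by
    ext k; simp [mul_apply_last_of_blockTriangular hB, hB_last]
  have hA_row : IsLeast {k | A (last n) k ≠ 0} (w.symm (last n)) := by
    simpa using hA.isLeast_ne_zero (w.symm (last n))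
  rw [hM_row] at hi0
  rw [hi0.unique hA_row, apply_symm_apply]

theorem IsFactorization.exists_eq_extend
    {t : Perm (Fin (n + 1)) × Matrix (Fin (n + 1)) (Fin (n + 1)) F ×
      Matrix (Fin (n + 1)) (Fin (n + 1)) F}
    (ht : IsFactorization M t) : ∃ t', t = extend M i0 t' := by
  obtain ⟨w, B, A⟩ := t
  obtain ⟨w', rfl⟩ := exists_extendPerm_eq (ht.apply_pivot_eq_last hi0)
  obtain ⟨⟨-, hB : B.BlockTriangular id⟩, hA : IsSEAugmented _ A, rfl : M = B * A⟩ := ht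
  have hA_pivot : A (last n) i0 = 1 := by simpa using hA.1 i0
  have hA_col : ∀ r : Fin n, A r.castSucc i0 = 0 := fun r => by
    simpa using hA.apply_eq_zero_of_apply_lt (i := (extendPerm w' i0).symm r.castSucc) (j := i0)
      (by simp [castSucc_lt_last])
  have hB_col : (fun r => (B * A) r i0) = fun r => B r (last n) := funext fun r => by
    simp [mul_apply, sum_univ_castSucc, hA_col, hA_pivot]
  have hA_row : (fun k => (B * A) (last n) k / (B * A) (last n) i0) = A (last n) := by
    have hB_last : B (last n) (last n) ≠ 0 := by simpa [mul_apply_last_of_blockTriangular hB, hA_pivot] using hi0.1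
    ext k
    rw [mul_apply_last_of_blockTriangular hB, mul_apply_last_of_blockTriangular hB, hA_pivot]
    field_simp
  refine ⟨(w', B.submatrix castSucc castSucc, A.submatrix castSucc i0.succAbove), ?_⟩
  rw [extend, hB_col, hA_row, extendUpper_submatrix fun k => hB (castSucc_lt_last k),
    extendAugmented_submatrix hA_col]

end Pivot

theorem existsUnique_isFactorization (M : Matrix (Fin n) (Fin n) F) (hM : IsUnit M) :
    ∃! t, IsFactorization M t := by
  induction n with
  | zero =>
    exact ⟨(1, 1, 1), ⟨⟨isUnit_one, fun i => i.elim0⟩, ⟨fun i => i.elim0, fun i => i.elim0⟩,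
      Subsingleton.elim _ _⟩, fun _ _ => Subsingleton.elim _ _⟩
  | succ n ih =>
    obtain ⟨i0, hi0⟩ := exists_isLeast_lastRow_ne_zero hM
    obtain ⟨t, ht, huniq⟩ := ih _ (isUnit_pivotSchurComplement hM hi0.1)
    refine ⟨extend M i0 t, (isFactorization_extend_iff hi0 t).2 ht, fun s hs => ?_⟩
    obtain ⟨s, rfl⟩ := hs.exists_eq_extend hi0
    rw [huniq s ((isFactorization_extend_iff hi0 s).1 hs)]

end Bruhat

/-- Bruhat decomposition in concrete form: every `M ∈ GL_n(F)` factors uniquely as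
`M = B · A` with `B` invertible upper triangular and `A` an SE `w`-augmented matrix
for a (unique) permutation `w`: `A_{w(i),i} = 1`, the entry `A_{w(i),j}` is arbitrary
when `(i,j)` is an inversion of `w`, and all other entries are `0`. -/
theorem stmt10 (F : Type*) [Field F] (n : ℕ) (M : Matrix (Fin n) (Fin n) F)
    (hM : IsUnit M) :
    ∃! t : Equiv.Perm (Fin n) × Matrix (Fin n) (Fin n) F × Matrix (Fin n) (Fin n) F,
      (IsUnit t.2.1 ∧ ∀ i j : Fin n, j < i → t.2.1 i j = 0) ∧
      ((∀ i : Fin n, t.2.2 (t.1 i) i = 1) ∧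
        ∀ i j : Fin n, j ≠ i → ¬(i < j ∧ t.1 j < t.1 i) → t.2.2 (t.1 i) j = 0) ∧
      M = t.2.1 * t.2.2 :=
  Bruhat.existsUnique_isFactorization M hM
end

section
/- Let λ be an integer partition with λ_j ≤ n - j for j ∈ [n], and for a permutation w ∈ S_n say w respects λ if w(j) ≤ n - λ_j for all j. Then the number of invertible n×n matrices over F_q respecting λ (meaning entries (i,j) with i > n - λ_j are zero) equals (q-1)^n q^{binom(n,2)} Σ_{w respects λ} q^{inv(w)}, where inv(w) = |Inv(w)| is the number of inversions of w. -/
/-!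
Both sides factor as products over the columns `j`, with `m j = n - λ j`. An invertible matrix
is a linearly independent family of columns, and column `j` must lie in the `m j`-dimensional
coordinate subspace while avoiding the `q ^ j`-element span of the previous columns; as `λ` is
antitone these subspaces increase, so the count is `∏ j, (q ^ m j - q ^ j)`. A permutation of
`Fin (n + 1)` is determined by `a = w 0` and the induced permutation of the remaining positions,
which contributes `a` inversions with position `0` and keeps its own; the constraint on `w`
becomes `a < m 0` plus a shifted constraint of the same kind, so the inversion generating
function is `∏ j, [m j - j]_q`. Finally `q ^ m - q ^ j = (q - 1) q ^ j [m - j]_q`.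
-/

open Finset Submodule

section ChainCount

variable {K V : Type*} [DivisionRing K] [AddCommGroup V] [Module K V]

def linearIndependentMemSnocEquiv {k : ℕ} (S : Fin (k + 1) → Submodule K V) :
    {v : Fin (k + 1) → V // LinearIndependent K v ∧ ∀ j, v j ∈ S j} ≃
      Σ s : {s : Fin k → V // LinearIndependent K s ∧ ∀ j, s j ∈ S j.castSucc},
        ↥((S (Fin.last k) : Set V) \ span K (Set.range s.1)) where
  toFun v :=
    ⟨⟨Fin.init v.1, (linearIndependent_finSucc'.mp v.2.1).1, fun j => v.2.2 j.castSucc⟩,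
      v.1 (Fin.last k), v.2.2 _, (linearIndependent_finSucc'.mp v.2.1).2⟩
  invFun s := ⟨Fin.snoc s.1.1 s.2.1, linearIndependent_finSnoc.mpr ⟨s.1.2.1, s.2.2.2⟩,
    Fin.lastCases (by simpa using s.2.2.1) (fun j => by simpa using s.1.2.2 j)⟩
  left_inv v := by simp
  right_inv _ := Sigma.subtype_ext (Subtype.ext (by simp)) (by simp)

variable [Fintype K] [Finite V]

attribute [local instance] Fintype.ofFinite in
theorem natCard_linearIndependent_mem_of_monotone {k : ℕ} (S : Fin k → Submodule K V)
    (hS : Monotone S) :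
    Nat.card {v : Fin k → V // LinearIndependent K v ∧ ∀ j, v j ∈ S j} =
      ∏ j : Fin k, (Nat.card (S j) - Fintype.card K ^ (j : ℕ)) := by
  induction k with
  | zero =>
    rw [univ_eq_empty, prod_empty, Nat.card_eq_one_iff_unique]
    exact ⟨⟨fun _ _ => Subtype.ext (Subsingleton.elim _ _)⟩,
      ⟨⟨finZeroElim, linearIndependent_empty_type, finZeroElim⟩⟩⟩
  | succ k ih =>
    have hcompl (s : {s : Fin k → V // LinearIndependent K s ∧ ∀ j, s j ∈ S j.castSucc}) :
        Nat.card ↥((S (Fin.last k) : Set V) \ span K (Set.range s.1)) =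
          Nat.card (S (Fin.last k)) - Fintype.card K ^ k := by
      have hle : span K (Set.range s.1) ≤ S (Fin.last k) :=
        span_le.mpr (Set.range_subset_iff.mpr fun j => hS (Fin.le_last _) (s.2.2 j))
      rw [Nat.card_coe_set_eq, Set.ncard_sdiff hle, ← Nat.card_coe_set_eq, ← Nat.card_coe_set_eq]
      congr
      rw [SetLike.coe_sort_coe, Module.natCard_eq_pow_finrank (K := K), Nat.card_eq_fintype_card,
        finrank_span_eq_card s.2.1, Fintype.card_fin]
    rw [Nat.card_congr (linearIndependentMemSnocEquiv S), Nat.card_sigma,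
      Finset.sum_congr rfl fun s _ => hcompl s, sum_const, card_univ, ← Nat.card_eq_fintype_card,
      ih _ fun i j hij => hS (Fin.castSucc_le_castSucc_iff.mpr hij), smul_eq_mul,
      Fin.prod_univ_castSucc]
    simp

end ChainCount

def supportedBelow (R : Type*) [Semiring R] (n m : ℕ) : Submodule R (Fin n → R) where
  carrier := {x | ∀ i : Fin n, m ≤ (i : ℕ) → x i = 0}
  add_mem' hx hy i hi := by simp [hx i hi, hy i hi]
  zero_mem' _ _ := rfl
  smul_mem' c _ hx i hi := by simp [hx i hi]

def supportedBelowEquiv (R : Type*) [Semiring R] (n m : ℕ) :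
    supportedBelow R n m ≃ ({i : Fin n // (i : ℕ) < m} → R) where
  toFun x i := x.1 i
  invFun g := ⟨fun i => if h : (i : ℕ) < m then g ⟨i, h⟩ else 0, fun _ hi => dif_neg hi.not_gt⟩
  left_inv x := Subtype.ext <| funext fun i => by
    by_cases h : (i : ℕ) < m
    · simp [h]
    · simp [h, x.2 i (not_lt.mp h)]
  right_inv g := funext fun i => by simp [i.2]

section supportedBelow

variable {R : Type*} [Semiring R] {n m m' : ℕ}

theorem supportedBelow_mono (h : m ≤ m') : supportedBelow R n m ≤ supportedBelow R n m' :=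
  fun _ hx i hi => hx i (h.trans hi)

theorem natCard_supportedBelow (h : m ≤ n) : Nat.card (supportedBelow R n m) = Nat.card R ^ m := by
  classical
  rw [Nat.card_congr (supportedBelowEquiv R n m), Nat.card_fun,
    Nat.card_eq_fintype_card (α := {i : Fin n // _}),
    Fintype.card_subtype, Fin.card_filter_val_lt, min_eq_right h]

end supportedBelow

theorem pow_sub_pow_eq_mul_geom_sum {q : ℕ} (hq : 1 ≤ q) (m j : ℕ) :
    q ^ m - q ^ j = (q - 1) * q ^ j * ∑ i ∈ range (m - j), q ^ i := by
  rcases le_total m j with hmj | hjm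
  · simp [Nat.sub_eq_zero_of_le hmj, Nat.pow_le_pow_right hq hmj]
  · obtain ⟨d, rfl⟩ := Nat.exists_eq_add_of_le hjm
    rw [Nat.add_sub_cancel_left, mul_assoc, mul_left_comm, ← mul_comm _ (q - 1),
      geom_sum_mul_of_one_le hq, pow_add, Nat.mul_sub_one]

theorem natCard_isUnit_matrix_zero_below {K : Type*} [Field K] [Fintype K] {n : ℕ}
    (m : Fin n → ℕ) (hm : Monotone m) (hmn : ∀ j, m j ≤ n) :
    Nat.card
        {A : Matrix (Fin n) (Fin n) K // IsUnit A ∧ ∀ i j : Fin n, m j ≤ (i : ℕ) → A i j = 0} =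
      ∏ j : Fin n, (Fintype.card K ^ m j - Fintype.card K ^ (j : ℕ)) := by
  let e : {A : Matrix (Fin n) (Fin n) K // IsUnit A ∧ ∀ i j : Fin n, m j ≤ (i : ℕ) → A i j = 0} ≃
      {v : Fin n → Fin n → K // LinearIndependent K v ∧ ∀ j, v j ∈ supportedBelow K n (m j)} :=
    { toFun A := ⟨A.1.col, Matrix.linearIndependent_cols_iff_isUnit.mpr A.2.1,
        fun j i hi => A.2.2 i j hi⟩
      invFun v := ⟨Matrix.of fun i j => v.1 j i,
        Matrix.linearIndependent_cols_iff_isUnit.mp v.2.1, fun i j hij => v.2.2 j i hij⟩ }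
  rw [Nat.card_congr e, natCard_linearIndependent_mem_of_monotone _
    fun i j hij => supportedBelow_mono (hm hij)]
  simp_rw [natCard_supportedBelow (hmn _), Nat.card_eq_fintype_card]

namespace Equiv.Perm

variable {n : ℕ}

def inversionCount (w : Perm (Fin n)) : ℕ :=
  #{p : Fin n × Fin n | p.1 < p.2 ∧ w p.2 < w p.1}

theorem inversionCount_eq_sum (w : Perm (Fin n)) :
    w.inversionCount = ∑ i, #{j | i < j ∧ w j < w i} := by
  simp only [inversionCount, card_filter, ← univ_product_univ, sum_product]

def succAboveCons (a : Fin (n + 1)) (π : Perm (Fin n)) : Perm (Fin (n + 1)) :=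
  (finSuccEquiv n).trans (π.optionCongr.trans (finSuccEquiv' a).symm)

@[simp] theorem succAboveCons_zero (a : Fin (n + 1)) (π : Perm (Fin n)) :
    succAboveCons a π 0 = a := by
  simp [succAboveCons]

@[simp] theorem succAboveCons_succ (a : Fin (n + 1)) (π : Perm (Fin n)) (j : Fin n) :
    succAboveCons a π j.succ = a.succAbove (π j) := by
  simp [succAboveCons]

theorem succAboveCons_injective : Function.Injective fun p : Fin (n + 1) × Perm (Fin n) =>
    succAboveCons p.1 p.2 := by
  rintro ⟨a, π⟩ ⟨a', π'⟩ h
  have ha : a = a' := by simpa using congr($h 0)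
  subst ha
  exact Prod.ext rfl <| Equiv.ext fun j => by simpa using congr($h j.succ)

noncomputable def succAboveConsEquiv (n : ℕ) : Fin (n + 1) × Perm (Fin n) ≃ Perm (Fin (n + 1)) :=
  Equiv.ofBijective _ <| (Fintype.bijective_iff_injective_and_card _).mpr
    ⟨succAboveCons_injective, by simp [Fintype.card_perm, Nat.factorial_succ]⟩

theorem inversionCount_succAboveCons (a : Fin (n + 1)) (π : Perm (Fin n)) :
    (succAboveCons a π).inversionCount = a + π.inversionCount := by
  rw [inversionCount_eq_sum, inversionCount_eq_sum, Fin.sum_univ_succ]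
  congr 1
  · -- the inversions `(0, j)` are the `j` with `π j < a`, and there are `a` of them
    rw [Fin.card_filter_univ_succ]
    simp only [lt_irrefl, false_and, if_false, Fin.succ_pos, true_and,
      succAboveCons_zero, succAboveCons_succ, Fin.succAbove_lt_iff_castSucc_lt]
    rw [card_filter, Equiv.sum_comp π (fun k : Fin n => if k.castSucc < a then 1 else 0),
      ← card_filter]
    simp only [Fin.lt_def, Fin.val_castSucc]
    rw [Fin.card_filter_val_lt, min_eq_right a.is_le]
  · refine sum_congr rfl fun i _ => ?_
    rw [Fin.card_filter_univ_succ]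
    simp [Fin.succAbove_lt_succAbove_iff, (Fin.succ_pos i).not_gt]

theorem forall_succAboveCons_lt_iff {b : Fin (n + 1) → ℕ} (hb : Monotone b) (a : Fin (n + 1))
    (π : Perm (Fin n)) :
    (∀ i, (succAboveCons a π i : ℕ) < b i) ↔ (a : ℕ) < b 0 ∧ ∀ j, (π j : ℕ) < b j.succ - 1 := by
  rw [Fin.forall_fin_succ]
  simp only [succAboveCons_zero, succAboveCons_succ]
  refine and_congr_right fun ha => forall_congr' fun j => ?_
  have := hb (Fin.zero_le j.succ)
  rcases lt_or_ge (π j).castSucc a with h | h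
  · rw [Fin.succAbove_of_castSucc_lt _ _ h]
    rw [Fin.lt_def, Fin.val_castSucc] at h
    simp only [Fin.val_castSucc]
    omega
  · rw [Fin.succAbove_of_le_castSucc _ _ h, Fin.val_succ]
    omega

theorem sum_pow_inversionCount {R : Type*} [CommSemiring R] (q : R) :
    ∀ {n : ℕ} (b : Fin n → ℕ), Monotone b → (∀ j, b j ≤ n) →
      ∑ w ∈ univ.filter (fun w : Perm (Fin n) => ∀ j, (w j : ℕ) < b j), q ^ w.inversionCount =
        ∏ j, ∑ i ∈ range (b j - j), q ^ i
  | 0, _, _, _ => by simp [inversionCount]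
  | n + 1, b, hb, hbn => by
    have ih := sum_pow_inversionCount q (fun j : Fin n => b j.succ - 1)
      (fun i j hij => Nat.sub_le_sub_right (hb (Fin.succ_le_succ_iff.mpr hij)) 1)
      (fun j => by have := hbn j.succ; omega)
    have hfirst : ∑ a : Fin (n + 1), (if (a : ℕ) < b 0 then q ^ (a : ℕ) else 0) =
        ∑ i ∈ range (b 0), q ^ i := by
      rw [Fin.sum_univ_eq_sum_range (fun i => if i < b 0 then q ^ i else 0), ← sum_filter,
        range_eq_Ico, range_eq_Ico, Ico_filter_lt, min_eq_right (hbn 0)]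
    rw [sum_filter, ← (succAboveConsEquiv n).sum_comp, Fintype.sum_prod_type]
    simp only [succAboveConsEquiv, Equiv.ofBijective_apply, forall_succAboveCons_lt_iff hb,
      inversionCount_succAboveCons, pow_add, ← ite_zero_mul_ite_zero]
    rw [← sum_mul_sum, hfirst, ← sum_filter, ih, Fin.prod_univ_succ]
    simp only [Fin.val_zero, Nat.sub_zero, Fin.val_succ, Nat.sub_sub, add_comm 1]

end Equiv.Perm

theorem stmt11_general (F : Type*) [Field F] [Fintype F] (q n : ℕ) (hq : q = Fintype.card F)
    (lam : Fin n → ℕ) (hmono : Antitone lam) :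
    Nat.card {A : Matrix (Fin n) (Fin n) F //
        IsUnit A ∧ ∀ i j : Fin n, n - lam j < (i : ℕ) + 1 → A i j = 0} =
      (q - 1) ^ n * q ^ n.choose 2 *
        ∑ w ∈ Finset.univ.filter
            (fun w : Equiv.Perm (Fin n) => ∀ j : Fin n, (w j : ℕ) + 1 ≤ n - lam j),
          q ^ (Finset.univ.filter
            (fun p : Fin n × Fin n => p.1 < p.2 ∧ w p.2 < w p.1)).card := by
  subst hq
  have hm : Monotone fun j : Fin n => n - lam j := fun i j hij => Nat.sub_le_sub_left (hmono hij) n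
  have hmn (j : Fin n) : n - lam j ≤ n := Nat.sub_le n (lam j)
  have hsum : ∑ j : Fin n, (j : ℕ) = n.choose 2 := by
    rw [Fin.sum_univ_eq_sum_range (fun i => i), sum_range_id, Nat.choose_two_right]
  calc _ = ∏ j : Fin n, (Fintype.card F ^ (n - lam j) - Fintype.card F ^ (j : ℕ)) := by
        simp only [Nat.lt_add_one_iff]
        exact natCard_isUnit_matrix_zero_below _ hm hmn
    _ = (Fintype.card F - 1) ^ n * Fintype.card F ^ n.choose 2 *
          ∏ j : Fin n, ∑ i ∈ range (n - lam j - j), Fintype.card F ^ i := by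
        simp only [pow_sub_pow_eq_mul_geom_sum Fintype.card_pos, prod_mul_distrib, prod_const,
          card_univ, Fintype.card_fin, prod_pow_eq_pow_sum, hsum]
    _ = _ := by
        -- on `ℕ`, `a < b` unfolds to `a + 1 ≤ b`
        rw [← Equiv.Perm.sum_pow_inversionCount _ _ hm hmn]
        rfl

/-- The number of invertible `n × n` matrices over `F_q` respecting a partition `λ`
(with `λ_j ≤ n - j`) equals `(q-1)^n q^{C(n,2)} Σ_{w respects λ} q^{inv(w)}`, where
the sum is over permutations `w` with `w(j) ≤ n - λ_j` for all `j`. -/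
theorem stmt11 (F : Type*) [Field F] [Fintype F] (q n : ℕ) (hq : q = Fintype.card F)
    (lam : Fin n → ℕ) (hmono : Antitone lam)
    (hbound : ∀ j : Fin n, lam j ≤ n - ((j : ℕ) + 1)) :
    Nat.card {A : Matrix (Fin n) (Fin n) F //
        IsUnit A ∧ ∀ i j : Fin n, n - lam j < (i : ℕ) + 1 → A i j = 0} =
      (q - 1) ^ n * q ^ n.choose 2 *
        ∑ w ∈ Finset.univ.filter
            (fun w : Equiv.Perm (Fin n) => ∀ j : Fin n, (w j : ℕ) + 1 ≤ n - lam j),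
          q ^ (Finset.univ.filter
            (fun p : Fin n × Fin n => p.1 < p.2 ∧ w p.2 < w p.1)).card :=
  stmt11_general F q n hq lam hmono
end

section
/- Let F be a field, k ≥ 1, and let E be the 2×(k+1)×k hypermatrix with E_{h,i,j} = 1 if i = h + j - 1 and 0 otherwise. For permutations σ ∈ S_{k+1} and π ∈ S_k with permutation matrices m_σ, m_{π^{-1}}, the hypermatrix (m_σ, m_{π^{-1}}) ∘ E (acting by simultaneous row operations m_σ on both faces and simultaneous column operations m_{π^{-1}}^T on both faces) equals the hypermatrix M with M_{1,i,j} = 1 iff i = w(j), M_{2,i,j} = 1 iff i = w(c(j)), and all other entries 0, where π̄ ∈ S_{k+1} fixes k+1 and extends π, w = σ∘π̄, and c = π̄^{-1}∘(1 2 ··· k+1)∘π̄. -/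
/-- Extend a permutation of `Fin k` to a permutation of `Fin (k+1)` fixing the last
element (`π̄`). -/
noncomputable def extendPerm (k : ℕ) (π : Equiv.Perm (Fin k)) : Equiv.Perm (Fin (k + 1)) :=
  π.viaFintypeEmbedding Fin.castSuccEmb

/-- The permutation matrix `m_σ` with `(m_σ)_{ij} = 1` iff `i = σ(j)`. -/
def permMat (F : Type*) [Zero F] [One F] {n : Type*} [DecidableEq n]
    (σ : Equiv.Perm n) : Matrix n n F :=
  Matrix.of fun i j => if i = σ j then 1 else 0

/-!
Both faces of `E` are 0/1 matrices with a single `1` in each column, at row `g j` for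
`g = Fin.castSucc` resp. `g = Fin.succ`. Multiplying by permutation matrices only reindexes
rows and columns, so `m_σ E_h m_{π⁻¹}ᵀ` has its `1`s at rows `σ (g (π j))`. It remains to
recognise `Fin.castSucc ∘ π = π̄ ∘ Fin.castSucc` and `Fin.succ = (1 2 ⋯ k+1) ∘ Fin.castSucc`.
-/

open Matrix

lemma extendPerm_castSucc (k : ℕ) (π : Equiv.Perm (Fin k)) (j : Fin k) :
    extendPerm k π j.castSucc = (π j).castSucc := by
  simpa [extendPerm] using Equiv.Perm.viaFintypeEmbedding_apply_image π Fin.castSuccEmb j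

section PermMat

variable {R : Type*} [NonAssocSemiring R] {m n : Type*}

lemma permMat_eq_toMatrix_toPEquiv [DecidableEq n] (σ : Equiv.Perm n) :
    permMat R σ = σ.symm.toPEquiv.toMatrix := by
  ext i j
  simp only [permMat, of_apply, PEquiv.toMatrix_apply, Equiv.toPEquiv_apply, Option.mem_def,
    Option.some_inj, Equiv.symm_apply_eq]

lemma transpose_permMat [DecidableEq n] (σ : Equiv.Perm n) : (permMat R σ)ᵀ = permMat R σ⁻¹ := by
  ext i j
  simp only [transpose_apply, permMat, of_apply, Equiv.Perm.eq_inv_iff_eq, eq_comm]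

lemma permMat_mul [DecidableEq m] [Fintype m] (σ : Equiv.Perm m) (M : Matrix m n R) :
    permMat R σ * M = M.submatrix ⇑σ⁻¹ id := by
  rw [permMat_eq_toMatrix_toPEquiv, PEquiv.toMatrix_toPEquiv_mul]
  rfl

lemma mul_permMat [DecidableEq n] [Fintype n] (σ : Equiv.Perm n) (M : Matrix m n R) :
    M * permMat R σ = M.submatrix id σ := by
  rw [permMat_eq_toMatrix_toPEquiv, PEquiv.mul_toMatrix_toPEquiv, Equiv.symm_symm]

lemma permMat_mul_mul_transpose_permMat_inv [DecidableEq m] [DecidableEq n] [Fintype m]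
    [Fintype n] (σ : Equiv.Perm m) (π : Equiv.Perm n) (g : n → m) :
    permMat R σ * (of fun i j => if i = g j then (1 : R) else 0) * (permMat R π⁻¹)ᵀ =
      of fun i j => if i = σ (g (π j)) then 1 else 0 := by
  rw [transpose_permMat, inv_inv, permMat_mul, mul_permMat]
  ext i j
  simp only [submatrix_apply, id, of_apply, Equiv.Perm.inv_eq_iff_eq]

end PermMat

/-- The hyperrook placement `(m_σ, m_{π⁻¹}) ∘ E` (acting by `(g₁,g₂) ∘ (M₁,M₂) =
(g₁M₁g₂ᵀ, g₁M₂g₂ᵀ)`) has its `1`s in the front face exactly at positions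
`(w(j), j)` and in the back face at `(w(c(j)), j)`, where `w = σ ∘ π̄` and
`c = π̄⁻¹ (1 2 ⋯ k+1) π̄`. -/
theorem stmt13 (F : Type*) [Field F] (k : ℕ) (σ : Equiv.Perm (Fin (k + 1)))
    (π : Equiv.Perm (Fin k)) :
    (permMat F σ * (Matrix.of fun (i : Fin (k + 1)) (j : Fin k) =>
        if (i : ℕ) = (j : ℕ) then (1 : F) else 0) * Matrix.transpose (permMat F π⁻¹) =
      Matrix.of fun (i : Fin (k + 1)) (j : Fin k) =>
        if i = (σ * extendPerm k π) j.castSucc then 1 else 0) ∧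
    (permMat F σ * (Matrix.of fun (i : Fin (k + 1)) (j : Fin k) =>
        if (i : ℕ) = (j : ℕ) + 1 then (1 : F) else 0) * Matrix.transpose (permMat F π⁻¹) =
      Matrix.of fun (i : Fin (k + 1)) (j : Fin k) =>
        if i = (σ * extendPerm k π)
            (((extendPerm k π)⁻¹ * finRotate (k + 1) * extendPerm k π) j.castSucc)
          then 1 else 0) := by
  have front_face : (of fun (i : Fin (k + 1)) (j : Fin k) =>
      if (i : ℕ) = (j : ℕ) then (1 : F) else 0) =
        of fun i j => if i = j.castSucc then 1 else 0 := by
    simp [Fin.ext_iff]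
  have back_face : (of fun (i : Fin (k + 1)) (j : Fin k) =>
      if (i : ℕ) = (j : ℕ) + 1 then (1 : F) else 0) =
        of fun i j => if i = j.succ then 1 else 0 := by
    simp [Fin.ext_iff]
  rw [front_face, back_face, permMat_mul_mul_transpose_permMat_inv,
    permMat_mul_mul_transpose_permMat_inv]
  simp [extendPerm_castSucc]
end
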